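/- Let q be a prime power with q not congruent to 2 modulo 3, let F be a finite field with q^6 elements, and let E_2 and E_3 be the subfields of F with q^2 and q^3 elements respectively. If x is a nonzero element of E_2 and y is a nonzero element of E_3 such that (xy)^{(q^2 − q + 1)(q − 1)} = 1, then xy lies in the subfield of F with q elements, i.e., (xy)^q = xy. -/

import Mathlib

/-!
Since `x ^ (q ^ 2 - 1) = 1` and `y ^ (q ^ 3 - 1) = 1`, the order of `x * y` divides
`(q ^ 2 - 1) * (q ^ 3 - 1) = (q - 1) ^ 2 * (q + 1) * (q ^ 2 + q + 1)`. The number `q ^ 2 - q + 1` is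
prime to `q - 1`, prime to `q + 1` unless `3 ∣ q + 1`, and prime to `q ^ 2 + q + 1` because it is
odd and prime to `q`. So the order of `x * y`, which divides `(q ^ 2 - q + 1) * (q - 1)`, divides
`q - 1`.
-/

namespace Int

lemma isCoprime_sq_sub_add_one_sub_one (q : ℤ) : IsCoprime (q ^ 2 - q + 1) (q - 1) :=
  ⟨1, -q, by ring⟩

lemma isCoprime_sq_sub_add_one_add_one {q : ℤ} (hq : ¬ 3 ∣ q + 1) :
    IsCoprime (q ^ 2 - q + 1) (q + 1) := by
  have h3 : IsCoprime 3 (q + 1) := (Int.prime_three.irreducible.coprime_iff_not_dvd).mpr hq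
  rw [show q ^ 2 - q + 1 = 3 + (q + 1) * (q - 2) by ring]
  exact h3.add_mul_left_left _

lemma isCoprime_sq_sub_add_one_sq_add_add_one (q : ℤ) :
    IsCoprime (q ^ 2 - q + 1) (q ^ 2 + q + 1) := by
  have h2 : IsCoprime (q ^ 2 - q + 1) 2 := by
    obtain ⟨k, hk⟩ := Int.even_mul_pred_self q
    exact ⟨1, -k, by linear_combination hk⟩
  have hq : IsCoprime (q ^ 2 - q + 1) q := ⟨1, -(q - 1), by ring⟩
  rw [show q ^ 2 + q + 1 = (q ^ 2 - q + 1) * 1 + 2 * q by ring]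
  exact (h2.mul_right hq).mul_add_left_right _

lemma isCoprime_sq_sub_add_one_mul {q : ℤ} (hq : ¬ 3 ∣ q + 1) :
    IsCoprime (q ^ 2 - q + 1) ((q ^ 2 - 1) * (q ^ 3 - 1)) := by
  rw [show (q ^ 2 - 1) * (q ^ 3 - 1) = (q - 1) * (q + 1) * ((q - 1) * (q ^ 2 + q + 1)) by ring]
  have h₁ := isCoprime_sq_sub_add_one_sub_one q
  exact (h₁.mul_right (isCoprime_sq_sub_add_one_add_one hq)).mul_right
    (h₁.mul_right (isCoprime_sq_sub_add_one_sq_add_add_one q))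

end Int

lemma Nat.coprime_sq_sub_add_one_mul {q : ℕ} (hq : q % 3 ≠ 2) :
    Nat.Coprime (q ^ 2 - q + 1) ((q ^ 2 - 1) * (q ^ 3 - 1)) := by
  obtain rfl | hq0 := Nat.eq_zero_or_pos q
  · simp
  rw [← Nat.isCoprime_iff_coprime]
  have h1 : q ≤ q ^ 2 := Nat.le_self_pow two_ne_zero q
  have h2 : 1 ≤ q ^ 2 := Nat.one_le_pow _ _ hq0
  have h3 : 1 ≤ q ^ 3 := Nat.one_le_pow _ _ hq0
  push_cast [h1, h2, h3]
  exact Int.isCoprime_sq_sub_add_one_mul (by omega)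

lemma pow_eq_one_of_pow_mul_eq_one_of_coprime {M : Type*} [Monoid M] {z : M} {a b c : ℕ}
    (hac : a.Coprime c) (hab : z ^ (a * b) = 1) (hc : z ^ c = 1) : z ^ b = 1 :=
  orderOf_dvd_iff_pow_eq_one.mp <|
    (Nat.Coprime.coprime_dvd_right (orderOf_dvd_of_pow_eq_one hc) hac).symm.dvd_of_dvd_mul_left
      (orderOf_dvd_of_pow_eq_one hab)

lemma Subfield.pow_card_sub_one_eq_one {F : Type*} [Field F] (K : Subfield F) [Finite K]
    {x : F} (hx : x ∈ K) (hx0 : x ≠ 0) : x ^ (Nat.card K - 1) = 1 := by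
  have : Fintype K := Fintype.ofFinite K
  rw [Nat.card_eq_fintype_card]
  exact congrArg Subtype.val (FiniteField.pow_card_sub_one_eq_one (⟨x, hx⟩ : K)
    fun h ↦ hx0 (congrArg Subtype.val h))

theorem segre_intersection_in_base_field_general (q : ℕ) (hq : IsPrimePow q) (hq3 : q % 3 ≠ 2)
    (F : Type*) [Field F]
    (E₂ E₃ : Subfield F) (hE₂ : Nat.card E₂ = q ^ 2) (hE₃ : Nat.card E₃ = q ^ 3)
    (x y : F) (hx : x ∈ E₂) (hy : y ∈ E₃) (hx0 : x ≠ 0) (hy0 : y ≠ 0)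
    (h : (x * y) ^ ((q ^ 2 - q + 1) * (q - 1)) = 1) :
    (x * y) ^ q = x * y := by
  have hq0 : q ≠ 0 := hq.ne_zero
  have : Finite E₂ := Nat.finite_of_card_ne_zero (by rw [hE₂]; positivity)
  have : Finite E₃ := Nat.finite_of_card_ne_zero (by rw [hE₃]; positivity)
  have hx1 : x ^ (q ^ 2 - 1) = 1 := hE₂ ▸ E₂.pow_card_sub_one_eq_one hx hx0
  have hy1 : y ^ (q ^ 3 - 1) = 1 := hE₃ ▸ E₃.pow_card_sub_one_eq_one hy hy0
  have hxy : (x * y) ^ ((q ^ 2 - 1) * (q ^ 3 - 1)) = 1 := by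
    rw [mul_pow, pow_mul, hx1, one_pow, one_mul, mul_comm, pow_mul, hy1, one_pow]
  have hq1 : (x * y) ^ (q - 1) = 1 :=
    pow_eq_one_of_pow_mul_eq_one_of_coprime (Nat.coprime_sq_sub_add_one_mul hq3) h hxy
  rw [← pow_sub_one_mul hq0, hq1, one_mul]

theorem segre_intersection_in_base_field (q : ℕ) (hq : IsPrimePow q) (hq3 : q % 3 ≠ 2)
    (F : Type*) [Field F] [Fintype F] (hF : Fintype.card F = q ^ 6)
    (E₂ E₃ : Subfield F) (hE₂ : Nat.card E₂ = q ^ 2) (hE₃ : Nat.card E₃ = q ^ 3)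
    (x y : F) (hx : x ∈ E₂) (hy : y ∈ E₃) (hx0 : x ≠ 0) (hy0 : y ≠ 0)
    (h : (x * y) ^ ((q ^ 2 - q + 1) * (q - 1)) = 1) :
    (x * y) ^ q = x * y :=
  segre_intersection_in_base_field_general q hq hq3 F E₂ E₃ hE₂ hE₃ x y hx hy hx0 hy0 h
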